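/- There exist constants β > 0 and ℓ₀ > 0 such that for every ℓ ≥ ℓ₀ and every continuously differentiable f : [0,ℓ] → ℝ with f(0) = 0 and ∫₀^ℓ f(s) tanh(s) cosh⁻²(s) ds = 0, the derivative is controlled by the Robin energy: (1 − 2/(2+β)) ∫₀^ℓ f'(s)² ds ≤ 2 e_ℓ(f). -/

import Mathlib

/-!
Since `tanh` solves `-u'' - 2 cosh⁻² u = 0`, writing `f = tanh · g` turns the Robin energy into
`∫₀^ℓ (tanh · g')²`: the boundary term at `ℓ` is exactly what integrating by parts against
`tanh' / tanh` produces, and nothing survives at `0` because `f(0) = 0`. The orthogonality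
condition says `∫ g w = 0` for the weight `w = tanh² cosh⁻²`, so Cauchy–Schwarz applied to
`g(x) - g(y) = ∫_y^x coth · (tanh · g')` bounds `∫ f² cosh⁻² = ∫ g² w` by `4 e_ℓ(f)`.
Finally `f(ℓ)² ≤ ℓ ∫ f'²` makes the boundary term at most `∫ f'² / cosh ℓ`, negligible for
large `ℓ`, so that `∫ f'² ≤ 10 e_ℓ(f)`.
-/

open Real Set MeasureTheory intervalIntegral Filter Topology

namespace Real

theorem tanh_pos {x : ℝ} (hx : 0 < x) : 0 < tanh x := by
  rw [tanh_eq_sinh_div_cosh]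
  exact div_pos (sinh_pos_iff.2 hx) (cosh_pos x)

theorem continuous_tanh : Continuous tanh := by
  rw [funext tanh_eq_sinh_div_cosh]
  exact continuous_sinh.div continuous_cosh fun x => (cosh_pos x).ne'

theorem hasDerivAt_tanh (x : ℝ) : HasDerivAt tanh (cosh x ^ 2)⁻¹ x := by
  rw [funext tanh_eq_sinh_div_cosh]
  refine ((hasDerivAt_sinh x).div (hasDerivAt_cosh x) (cosh_pos x).ne').congr_deriv ?_
  rw [← sq, ← sq, cosh_sq_sub_sinh_sq, one_div]

theorem inv_cosh_sq_div_tanh (x : ℝ) : (cosh x ^ 2)⁻¹ / tanh x = (sinh x * cosh x)⁻¹ := by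
  have hcosh := (cosh_pos x).ne'
  rw [tanh_eq_sinh_div_cosh, div_div_eq_mul_div, mul_inv]
  field_simp

theorem inv_cosh_sq_div_tanh_le_inv {x : ℝ} (hx : 0 < x) : (cosh x ^ 2)⁻¹ / tanh x ≤ x⁻¹ := by
  rw [inv_cosh_sq_div_tanh]
  exact inv_anti₀ hx (by nlinarith [(self_lt_sinh_iff.2 hx).le, one_le_cosh x])

theorem add_inv_tanh_mul_sq_le {x : ℝ} (hx : 0 < x) :
    (x + (tanh x)⁻¹) * (tanh x / cosh x) ^ 2 ≤ 2 * (sinh x / cosh x ^ 2) := by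
  have hsinh := sinh_pos_iff.2 hx
  have hcosh := cosh_pos x
  have htanh : tanh x ≤ 1 := (tanh_lt_one x).le
  have hsplit : (x + (tanh x)⁻¹) * (tanh x / cosh x) ^ 2
      = (x * tanh x ^ 2 + tanh x) / cosh x ^ 2 := by
    field_simp [(tanh_pos hx).ne']
  rw [hsplit, ← mul_div_assoc]
  gcongr
  have h1 : x * tanh x ^ 2 ≤ sinh x :=
    (mul_le_of_le_one_right hx.le (pow_le_one₀ (tanh_pos hx).le htanh)).trans
      (self_lt_sinh_iff.2 hx).le
  have h2 : tanh x ≤ sinh x := by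
    rw [tanh_eq_sinh_div_cosh]
    exact div_le_self hsinh.le (one_le_cosh x)
  linarith

theorem continuous_inv_cosh_sq : Continuous fun x => (cosh x ^ 2)⁻¹ :=
  (continuous_cosh.pow 2).inv₀ fun x => (pow_pos (cosh_pos x) 2).ne'

theorem continuous_tanh_div_cosh : Continuous fun x => tanh x / cosh x :=
  continuous_tanh.div continuous_cosh fun x => (cosh_pos x).ne'

theorem continuous_sinh_div_cosh_sq : Continuous fun x => sinh x / cosh x ^ 2 :=
  continuous_sinh.div (continuous_cosh.pow 2) fun x => (pow_pos (cosh_pos x) 2).ne'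

end Real

theorem integral_tanh_div_cosh_sq (ℓ : ℝ) :
    ∫ s in (0:ℝ)..ℓ, (tanh s / cosh s) ^ 2 = tanh ℓ ^ 3 / 3 := by
  have hderiv (x : ℝ) : HasDerivAt (fun s => tanh s ^ 3 / 3) ((tanh x / cosh x) ^ 2) x := by
    refine (((hasDerivAt_tanh x).pow 3).div_const 3).congr_deriv ?_
    norm_num
    ring
  rw [integral_eq_sub_of_hasDerivAt (fun x _ => hderiv x)
    ((continuous_tanh_div_cosh.pow 2).intervalIntegrable 0 ℓ)]
  simp

theorem integral_sinh_div_cosh_sq_le_one (ℓ : ℝ) : ∫ s in (0:ℝ)..ℓ, sinh s / cosh s ^ 2 ≤ 1 := by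
  have hderiv (x : ℝ) : HasDerivAt (fun s => -(cosh s)⁻¹) (sinh x / cosh x ^ 2) x := by
    refine ((hasDerivAt_cosh x).inv (cosh_pos x).ne').neg.congr_deriv ?_
    ring
  rw [integral_eq_sub_of_hasDerivAt (fun x _ => hderiv x)
    (continuous_sinh_div_cosh_sq.intervalIntegrable 0 ℓ)]
  have := cosh_pos ℓ
  simp only [cosh_zero, inv_one]
  linarith [inv_pos.2 this]

theorem integral_inv_tanh_sq_le {x y : ℝ} (hy : 0 < y) (hyx : y ≤ x) :
    ∫ s in y..x, (tanh s)⁻¹ ^ 2 ≤ x + (tanh y)⁻¹ := by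
  have hpos : ∀ s ∈ uIcc y x, 0 < s := fun s hs => hy.trans_le (uIcc_of_le hyx ▸ hs).1
  have hderiv : ∀ s ∈ uIcc y x, HasDerivAt (fun t => t - (tanh t)⁻¹) ((tanh s)⁻¹ ^ 2) s := by
    intro s hs
    have htanh := (tanh_pos (hpos s hs)).ne'
    refine ((hasDerivAt_id s).sub ((hasDerivAt_tanh s).inv htanh)).congr_deriv ?_
    rw [tanh_eq_sinh_div_cosh] at htanh ⊢
    have hsinh : sinh s ≠ 0 := by rintro h; simp [h] at htanh
    field_simp
    linear_combination -cosh_sq_sub_sinh_sq s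
  have hcont : ContinuousOn (fun s => (tanh s)⁻¹ ^ 2) (uIcc y x) :=
    (continuous_tanh.continuousOn.inv₀ fun s hs => (tanh_pos (hpos s hs)).ne').pow 2
  rw [integral_eq_sub_of_hasDerivAt hderiv hcont.intervalIntegrable]
  have := inv_pos.2 (tanh_pos (hy.trans_le hyx))
  linarith

theorem sq_integral_mul_le_integral_sq_mul_integral_sq {a b : ℝ} (hab : a ≤ b) {u v : ℝ → ℝ}
    (hu : IntervalIntegrable (fun s => u s ^ 2) volume a b)
    (hv : IntervalIntegrable (fun s => v s ^ 2) volume a b)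
    (huv : IntervalIntegrable (fun s => u s * v s) volume a b) :
    (∫ s in a..b, u s * v s) ^ 2 ≤ (∫ s in a..b, u s ^ 2) * ∫ s in a..b, v s ^ 2 := by
  have hquad (t : ℝ) : 0 ≤ (∫ s in a..b, v s ^ 2) * (t * t)
      + 2 * (∫ s in a..b, u s * v s) * t + ∫ s in a..b, u s ^ 2 := by
    have hexpand : (fun s => (u s + t * v s) ^ 2)
        = fun s => u s ^ 2 + (2 * t * (u s * v s) + t * t * v s ^ 2) := by
      funext s; ring
    have h0 := integral_nonneg (μ := volume) hab fun s _ => sq_nonneg (u s + t * v s)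
    rw [hexpand, integral_add hu ((huv.const_mul _).add (hv.const_mul _)),
      integral_add (huv.const_mul _) (hv.const_mul _), intervalIntegral.integral_const_mul,
      intervalIntegral.integral_const_mul] at h0
    linarith
  have := discrim_le_zero hquad
  rw [discrim] at this
  nlinarith

theorem sq_sub_le_mul_integral_deriv_sq {f : ℝ → ℝ} (hf : ContDiff ℝ 1 f) {a b : ℝ} (hab : a ≤ b) :
    (f b - f a) ^ 2 ≤ (b - a) * ∫ s in a..b, deriv f s ^ 2 := by
  have hf' : Continuous (deriv f) := hf.continuous_deriv le_rfl
  have hftc : ∫ s in a..b, deriv f s = f b - f a :=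
    integral_deriv_eq_sub (fun x _ => hf.differentiable one_ne_zero x) (hf'.intervalIntegrable a b)
  have hcs := sq_integral_mul_le_integral_sq_mul_integral_sq hab (u := fun _ => 1) (v := deriv f)
    (by simp) ((hf'.pow 2).intervalIntegrable a b) (by simpa using hf'.intervalIntegrable a b)
  simpa [hftc] using hcs

/-- `tanh · (f / tanh)'`; `tanh` spans the kernel of `-d²/ds² - 2 cosh⁻²`. -/
noncomputable def groundStateDeriv (f : ℝ → ℝ) (s : ℝ) : ℝ :=
  deriv f s - f s * (cosh s ^ 2)⁻¹ / tanh s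

noncomputable def robinEnergy (ℓ : ℝ) (f : ℝ → ℝ) : ℝ :=
  (∫ s in (0:ℝ)..ℓ, (deriv f s)^2) - 2 * (∫ s in (0:ℝ)..ℓ, (f s)^2 * ((cosh s)^2)⁻¹)
    - (f ℓ)^2 * ((cosh ℓ)^2)⁻¹ / tanh ℓ

theorem abs_mul_inv_cosh_sq_div_tanh_le {a s M : ℝ} (hs : 0 < s) (ha : |a| ≤ M * s) :
    |a * (cosh s ^ 2)⁻¹ / tanh s| ≤ M := by
  have hq : 0 ≤ (cosh s ^ 2)⁻¹ / tanh s := div_nonneg (by positivity) (tanh_pos hs).le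
  rw [mul_div_assoc, abs_mul, abs_of_nonneg hq]
  calc |a| * ((cosh s ^ 2)⁻¹ / tanh s) ≤ M * s * s⁻¹ :=
        mul_le_mul ha (inv_cosh_sq_div_tanh_le_inv hs) hq ((abs_nonneg a).trans ha)
    _ = M := by field_simp

section RobinEnergy

variable {f : ℝ → ℝ}

theorem continuousOn_groundStateDeriv (hf : ContDiff ℝ 1 f) :
    ContinuousOn (groundStateDeriv f) (Ioi 0) :=
  (hf.continuous_deriv le_rfl).continuousOn.sub <|
    (hf.continuous.mul continuous_inv_cosh_sq).continuousOn.div continuous_tanh.continuousOn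
      fun _ hs => (tanh_pos hs).ne'

theorem exists_abs_deriv_le_and_abs_le_mul (hf : ContDiff ℝ 1 f) (hf0 : f 0 = 0) (ℓ : ℝ) :
    ∃ M, (∀ s ∈ Icc 0 ℓ, |deriv f s| ≤ M) ∧ ∀ s ∈ Icc 0 ℓ, |f s| ≤ M * s := by
  obtain ⟨M, hM⟩ :=
    (isCompact_Icc (a := (0:ℝ)) (b := ℓ)).exists_bound_of_continuousOn
      (hf.continuous_deriv le_rfl).continuousOn
  refine ⟨M, hM, fun s hs => ?_⟩
  simpa [hf0] using norm_image_sub_le_of_norm_deriv_le_segment'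
    (fun x _ => (hf.differentiable one_ne_zero x).hasDerivAt.hasDerivWithinAt)
    (fun x hx => hM x (Ico_subset_Icc_self hx)) s hs

theorem intervalIntegrable_groundStateDeriv_sq (hf : ContDiff ℝ 1 f) (hf0 : f 0 = 0) {ℓ : ℝ}
    (hℓ : 0 ≤ ℓ) : IntervalIntegrable (fun s => groundStateDeriv f s ^ 2) volume 0 ℓ := by
  obtain ⟨M, hf'M, hfM⟩ := exists_abs_deriv_le_and_abs_le_mul hf hf0 ℓ
  refine (intervalIntegrable_const (c := (2 * M) ^ 2)).mono_fun ?_ ?_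
  · rw [uIoc_of_le hℓ]
    exact (((continuousOn_groundStateDeriv hf).mono Ioc_subset_Ioi_self).pow 2).aestronglyMeasurable
      measurableSet_Ioc
  · rw [uIoc_of_le hℓ]
    refine (ae_restrict_iff' measurableSet_Ioc).2 (ae_of_all _ fun s hs => ?_)
    have hs' : s ∈ Icc 0 ℓ := Ioc_subset_Icc_self hs
    have hbound : |groundStateDeriv f s| ≤ 2 * M :=
      calc |groundStateDeriv f s| ≤ |deriv f s| + |f s * (cosh s ^ 2)⁻¹ / tanh s| := abs_sub _ _
        _ ≤ M + M := add_le_add (hf'M s hs') (abs_mul_inv_cosh_sq_div_tanh_le hs.1 (hfM s hs'))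
        _ = 2 * M := by ring
    simp only [norm_pow, Real.norm_eq_abs]
    exact pow_le_pow_left₀ (abs_nonneg _) (hbound.trans (le_abs_self _)) 2

theorem continuousOn_sq_mul_inv_cosh_sq_div_tanh (hf : ContDiff ℝ 1 f) (hf0 : f 0 = 0) (ℓ : ℝ) :
    ContinuousOn (fun s => f s ^ 2 * (cosh s ^ 2)⁻¹ / tanh s) (Icc 0 ℓ) := by
  obtain ⟨M, -, hfM⟩ := exists_abs_deriv_le_and_abs_le_mul hf hf0 ℓ
  intro s hs
  rcases hs.1.eq_or_lt with rfl | hs0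
  · have hbound : ∀ t ∈ Icc 0 ℓ, ‖f t ^ 2 * (cosh t ^ 2)⁻¹ / tanh t‖ ≤ |f t| * M := by
      intro t ht
      rcases ht.1.eq_or_lt with rfl | ht0
      · simp [hf0]
      · rw [Real.norm_eq_abs, show f t ^ 2 * (cosh t ^ 2)⁻¹ / tanh t
          = f t * (f t * (cosh t ^ 2)⁻¹ / tanh t) by ring, abs_mul]
        exact mul_le_mul_of_nonneg_left (abs_mul_inv_cosh_sq_div_tanh_le ht0 (hfM t ht))
          (abs_nonneg _)
    have hcont : Continuous fun t => |f t| * M := by fun_prop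
    have hlim : Tendsto (fun t => |f t| * M) (𝓝 0) (𝓝 0) := hcont.tendsto' 0 0 (by simp [hf0])
    rw [ContinuousWithinAt, tanh_zero, div_zero]
    exact squeeze_zero_norm' (eventually_nhdsWithin_of_forall hbound)
      (hlim.mono_left nhdsWithin_le_nhds)
  · exact ((((hf.continuous.pow 2).mul continuous_inv_cosh_sq).continuousAt).div
      continuous_tanh.continuousAt (tanh_pos hs0).ne').continuousWithinAt

theorem hasDerivAt_sq_mul_inv_cosh_sq_div_tanh {s : ℝ} (hf : DifferentiableAt ℝ f s) (hs : 0 < s) :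
    HasDerivAt (fun t => f t ^ 2 * (cosh t ^ 2)⁻¹ / tanh t)
      (deriv f s ^ 2 - groundStateDeriv f s ^ 2 - 2 * (f s ^ 2 * (cosh s ^ 2)⁻¹)) s := by
  have htanh := (tanh_pos hs).ne'
  have hcosh := (cosh_pos s).ne'
  refine (((hf.hasDerivAt.pow 2).mul (((hasDerivAt_cosh s).pow 2).inv (pow_ne_zero 2 hcosh))).div
    (hasDerivAt_tanh s) htanh).congr_deriv ?_
  simp only [groundStateDeriv, Pi.pow_apply, Pi.inv_apply, Pi.mul_apply]
  rw [tanh_eq_sinh_div_cosh] at htanh ⊢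
  have hsinh : sinh s ≠ 0 := by rintro h; simp [h] at htanh
  field_simp
  ring

theorem robinEnergy_eq_integral_groundStateDeriv_sq (hf : ContDiff ℝ 1 f) (hf0 : f 0 = 0) {ℓ : ℝ}
    (hℓ : 0 ≤ ℓ) : robinEnergy ℓ f = ∫ s in (0:ℝ)..ℓ, groundStateDeriv f s ^ 2 := by
  have hA : IntervalIntegrable (fun s => deriv f s ^ 2) volume 0 ℓ :=
    ((hf.continuous_deriv le_rfl).pow 2).intervalIntegrable 0 ℓ
  have hB : IntervalIntegrable (fun s => 2 * (f s ^ 2 * (cosh s ^ 2)⁻¹)) volume 0 ℓ :=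
    (continuous_const.mul ((hf.continuous.pow 2).mul continuous_inv_cosh_sq)).intervalIntegrable 0 ℓ
  have hE := intervalIntegrable_groundStateDeriv_sq hf hf0 hℓ
  have hftc := integral_eq_sub_of_hasDerivAt_of_le hℓ
    (continuousOn_sq_mul_inv_cosh_sq_div_tanh hf hf0 ℓ)
    (fun s hs => hasDerivAt_sq_mul_inv_cosh_sq_div_tanh (hf.differentiable one_ne_zero s) hs.1)
    ((hA.sub hE).sub hB)
  rw [integral_sub (hA.sub hE) hB, integral_sub hA hE, intervalIntegral.integral_const_mul,
    tanh_zero, div_zero, sub_zero] at hftc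
  rw [robinEnergy]
  linarith

theorem hasDerivAt_div_tanh {s : ℝ} (hf : DifferentiableAt ℝ f s) (hs : 0 < s) :
    HasDerivAt (fun t => f t / tanh t) (groundStateDeriv f s / tanh s) s := by
  have htanh := (tanh_pos hs).ne'
  refine (hf.hasDerivAt.div (hasDerivAt_tanh s) htanh).congr_deriv ?_
  rw [groundStateDeriv]
  field_simp

theorem sq_div_tanh_sub_le (hf : ContDiff ℝ 1 f) {x y : ℝ} (hy : 0 < y) (hyx : y ≤ x) :
    (f x / tanh x - f y / tanh y) ^ 2
      ≤ (x + (tanh y)⁻¹) * ∫ s in y..x, groundStateDeriv f s ^ 2 := by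
  have hpos : uIcc y x ⊆ Ioi 0 := fun s hs => hy.trans_le (uIcc_of_le hyx ▸ hs).1
  have hinv : ContinuousOn (fun s => (tanh s)⁻¹) (uIcc y x) :=
    continuous_tanh.continuousOn.inv₀ fun s hs => (tanh_pos (hpos hs)).ne'
  have hh : ContinuousOn (groundStateDeriv f) (uIcc y x) :=
    (continuousOn_groundStateDeriv hf).mono hpos
  have hftc : ∫ s in y..x, (tanh s)⁻¹ * groundStateDeriv f s = f x / tanh x - f y / tanh y :=
    integral_eq_sub_of_hasDerivAt
      (fun s hs => (hasDerivAt_div_tanh (hf.differentiable one_ne_zero s) (hpos hs)).congr_deriv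
        (div_eq_inv_mul _ _))
      (hinv.mul hh).intervalIntegrable
  calc (f x / tanh x - f y / tanh y) ^ 2
      ≤ (∫ s in y..x, (tanh s)⁻¹ ^ 2) * ∫ s in y..x, groundStateDeriv f s ^ 2 := by
        rw [← hftc]
        exact sq_integral_mul_le_integral_sq_mul_integral_sq hyx (hinv.pow 2).intervalIntegrable
          (hh.pow 2).intervalIntegrable (hinv.mul hh).intervalIntegrable
    _ ≤ (x + (tanh y)⁻¹) * ∫ s in y..x, groundStateDeriv f s ^ 2 :=
        mul_le_mul_of_nonneg_right (integral_inv_tanh_sq_le hy hyx)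
          (integral_nonneg hyx fun s _ => sq_nonneg _)

theorem sq_div_tanh_sub_le_of_mem_Ioc (hf : ContDiff ℝ 1 f) (hf0 : f 0 = 0) {ℓ x y : ℝ}
    (hx : x ∈ Ioc 0 ℓ) (hy : y ∈ Ioc 0 ℓ) :
    (f x / tanh x - f y / tanh y) ^ 2
      ≤ (x + (tanh x)⁻¹ + (y + (tanh y)⁻¹)) * ∫ s in (0:ℝ)..ℓ, groundStateDeriv f s ^ 2 := by
  wlog hyx : y ≤ x generalizing x y
  · rw [← neg_sub, neg_sq, add_comm (x + _)]
    exact this hy hx (le_of_not_ge hyx)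
  have hx' := inv_pos.2 (tanh_pos hx.1)
  have hy' := inv_pos.2 (tanh_pos hy.1)
  calc (f x / tanh x - f y / tanh y) ^ 2
      ≤ (x + (tanh y)⁻¹) * ∫ s in y..x, groundStateDeriv f s ^ 2 := sq_div_tanh_sub_le hf hy.1 hyx
    _ ≤ _ := by
        refine mul_le_mul (by linarith [hy.1]) (integral_mono_interval hy.1.le hyx hx.2
          (ae_of_all _ fun _ => sq_nonneg _)
          (intervalIntegrable_groundStateDeriv_sq hf hf0 (hx.1.le.trans hx.2)))
          (integral_nonneg hyx fun _ _ => sq_nonneg _) (by linarith [hx.1, hy.1])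

/- For `s > 0` the integrand is `(g x - g s)² (tanh s / cosh s)²` with `g = f / tanh`; written
this way it is continuous at `s = 0`. -/
theorem integral_sq_div_tanh_mul_sub_div_cosh_le (hf : ContDiff ℝ 1 f) (hf0 : f 0 = 0) {ℓ x : ℝ}
    (hx : x ∈ Ioc 0 ℓ) :
    ∫ s in (0:ℝ)..ℓ, (f x / tanh x * (tanh s / cosh s) - f s / cosh s) ^ 2
      ≤ (∫ s in (0:ℝ)..ℓ, groundStateDeriv f s ^ 2)
        * ((x + (tanh x)⁻¹) * (tanh ℓ ^ 3 / 3) + 2) := by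
  set E := ∫ s in (0:ℝ)..ℓ, groundStateDeriv f s ^ 2
  set g := f x / tanh x
  have hℓ : 0 ≤ ℓ := hx.1.le.trans hx.2
  have hE0 : 0 ≤ E := integral_nonneg hℓ fun _ _ => sq_nonneg _
  have hmajor : ∀ s ∈ Icc 0 ℓ, (g * (tanh s / cosh s) - f s / cosh s) ^ 2
      ≤ E * ((x + (tanh x)⁻¹) * (tanh s / cosh s) ^ 2 + 2 * (sinh s / cosh s ^ 2)) := by
    intro s hs
    rcases hs.1.eq_or_lt with rfl | hs0
    · simp [hf0]
    calc (g * (tanh s / cosh s) - f s / cosh s) ^ 2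
        = (g - f s / tanh s) ^ 2 * (tanh s / cosh s) ^ 2 := by
          field_simp [(tanh_pos hs0).ne']
      _ ≤ (x + (tanh x)⁻¹ + (s + (tanh s)⁻¹)) * E * (tanh s / cosh s) ^ 2 := by
          gcongr
          exact sq_div_tanh_sub_le_of_mem_Ioc hf hf0 hx ⟨hs0, hs.2⟩
      _ = E * ((x + (tanh x)⁻¹) * (tanh s / cosh s) ^ 2
            + (s + (tanh s)⁻¹) * (tanh s / cosh s) ^ 2) := by ring
      _ ≤ _ := by gcongr E * (_ + ?_); exact add_inv_tanh_mul_sq_le hs0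
  have hU : Continuous fun s => g * (tanh s / cosh s) - f s / cosh s :=
    (continuous_const.mul continuous_tanh_div_cosh).sub
      (hf.continuous.div continuous_cosh fun s => (cosh_pos s).ne')
  have h1 : IntervalIntegrable (fun s => (x + (tanh x)⁻¹) * (tanh s / cosh s) ^ 2) volume 0 ℓ :=
    (continuous_const.mul (continuous_tanh_div_cosh.pow 2)).intervalIntegrable _ _
  have h2 : IntervalIntegrable (fun s => 2 * (sinh s / cosh s ^ 2)) volume 0 ℓ :=
    (continuous_const.mul continuous_sinh_div_cosh_sq).intervalIntegrable _ _
  calc _ ≤ ∫ s in (0:ℝ)..ℓ,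
          E * ((x + (tanh x)⁻¹) * (tanh s / cosh s) ^ 2 + 2 * (sinh s / cosh s ^ 2)) :=
        integral_mono_on hℓ ((hU.pow 2).intervalIntegrable _ _) ((h1.add h2).const_mul E) hmajor
    _ = E * ((x + (tanh x)⁻¹) * (tanh ℓ ^ 3 / 3) + 2 * ∫ s in (0:ℝ)..ℓ, sinh s / cosh s ^ 2) := by
        rw [intervalIntegral.integral_const_mul, integral_add h1 h2,
          intervalIntegral.integral_const_mul, intervalIntegral.integral_const_mul,
          integral_tanh_div_cosh_sq]
    _ ≤ E * ((x + (tanh x)⁻¹) * (tanh ℓ ^ 3 / 3) + 2) := by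
        gcongr
        linarith [integral_sinh_div_cosh_sq_le_one ℓ]

theorem sq_mul_div_tanh_le (hf : ContDiff ℝ 1 f) (hf0 : f 0 = 0) {ℓ x : ℝ}
    (horth : ∫ s in (0:ℝ)..ℓ, f s * tanh s * (cosh s ^ 2)⁻¹ = 0) (hx : x ∈ Ioc 0 ℓ) :
    (tanh ℓ ^ 3 / 3 * (f x / tanh x)) ^ 2
      ≤ tanh ℓ ^ 3 / 3 * (∫ s in (0:ℝ)..ℓ, groundStateDeriv f s ^ 2)
        * (tanh ℓ ^ 3 / 3 * (x + (tanh x)⁻¹) + 2) := by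
  set m := tanh ℓ ^ 3 / 3
  set g := f x / tanh x
  have hℓ : 0 ≤ ℓ := hx.1.le.trans hx.2
  have hm : ∫ s in (0:ℝ)..ℓ, (tanh s / cosh s) ^ 2 = m := integral_tanh_div_cosh_sq ℓ
  have hm0 : 0 ≤ m := by have := tanh_pos (hx.1.trans_le hx.2); positivity
  set U := fun s => g * (tanh s / cosh s) - f s / cosh s with hU
  have hUc : Continuous U :=
    (continuous_const.mul continuous_tanh_div_cosh).sub
      (hf.continuous.div continuous_cosh fun s => (cosh_pos s).ne')
  have hUv : ∫ s in (0:ℝ)..ℓ, U s * (tanh s / cosh s) = m * g := by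
    have hexpand (s : ℝ) : U s * (tanh s / cosh s)
        = g * (tanh s / cosh s) ^ 2 - f s * tanh s * (cosh s ^ 2)⁻¹ := by
      simp only [hU]; ring
    have h1 : IntervalIntegrable (fun s => g * (tanh s / cosh s) ^ 2) volume 0 ℓ :=
      (continuous_const.mul (continuous_tanh_div_cosh.pow 2)).intervalIntegrable _ _
    have h2 : IntervalIntegrable (fun s => f s * tanh s * (cosh s ^ 2)⁻¹) volume 0 ℓ :=
      ((hf.continuous.mul continuous_tanh).mul continuous_inv_cosh_sq).intervalIntegrable _ _
    simp_rw [hexpand]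
    rw [integral_sub h1 h2, intervalIntegral.integral_const_mul, hm, horth, sub_zero, mul_comm]
  have hcs := sq_integral_mul_le_integral_sq_mul_integral_sq hℓ
    ((hUc.pow 2).intervalIntegrable 0 ℓ) ((continuous_tanh_div_cosh.pow 2).intervalIntegrable 0 ℓ)
    ((hUc.mul continuous_tanh_div_cosh).intervalIntegrable 0 ℓ)
  rw [hUv, hm] at hcs
  calc (m * g) ^ 2 ≤ (∫ s in (0:ℝ)..ℓ, U s ^ 2) * m := hcs
    _ ≤ (∫ s in (0:ℝ)..ℓ, groundStateDeriv f s ^ 2) * ((x + (tanh x)⁻¹) * m + 2) * m :=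
        mul_le_mul_of_nonneg_right (integral_sq_div_tanh_mul_sub_div_cosh_le hf hf0 hx) hm0
    _ = _ := by ring

theorem integral_sq_mul_inv_cosh_sq_le (hf : ContDiff ℝ 1 f) (hf0 : f 0 = 0) {ℓ : ℝ} (hℓ : 0 < ℓ)
    (horth : ∫ s in (0:ℝ)..ℓ, f s * tanh s * (cosh s ^ 2)⁻¹ = 0) :
    ∫ s in (0:ℝ)..ℓ, f s ^ 2 * (cosh s ^ 2)⁻¹
      ≤ 4 * ∫ s in (0:ℝ)..ℓ, groundStateDeriv f s ^ 2 := by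
  set m := tanh ℓ ^ 3 / 3
  set E := ∫ s in (0:ℝ)..ℓ, groundStateDeriv f s ^ 2
  have hm0 : 0 < m := by have := tanh_pos hℓ; positivity
  have hE0 : 0 ≤ E := integral_nonneg hℓ.le fun _ _ => sq_nonneg _
  have hmajor : ∀ x ∈ Icc 0 ℓ, m ^ 2 * (f x ^ 2 * (cosh x ^ 2)⁻¹)
      ≤ m * E * (m * (2 * (sinh x / cosh x ^ 2)) + 2 * (tanh x / cosh x) ^ 2) := by
    intro x hx
    rcases hx.1.eq_or_lt with rfl | hx0
    · simp [hf0]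
    calc m ^ 2 * (f x ^ 2 * (cosh x ^ 2)⁻¹)
        = (m * (f x / tanh x)) ^ 2 * (tanh x / cosh x) ^ 2 := by
          field_simp [(tanh_pos hx0).ne']
      _ ≤ m * E * (m * (x + (tanh x)⁻¹) + 2) * (tanh x / cosh x) ^ 2 := by
          gcongr
          exact sq_mul_div_tanh_le hf hf0 horth ⟨hx0, hx.2⟩
      _ = m * E * (m * ((x + (tanh x)⁻¹) * (tanh x / cosh x) ^ 2)
            + 2 * (tanh x / cosh x) ^ 2) := by ring
      _ ≤ _ := by gcongr m * E * (m * ?_ + _); exact add_inv_tanh_mul_sq_le hx0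
  have h0 : IntervalIntegrable (fun s => m ^ 2 * (f s ^ 2 * (cosh s ^ 2)⁻¹)) volume 0 ℓ :=
    (continuous_const.mul ((hf.continuous.pow 2).mul continuous_inv_cosh_sq)).intervalIntegrable _ _
  have h1 : IntervalIntegrable (fun s => m * (2 * (sinh s / cosh s ^ 2))) volume 0 ℓ :=
    (continuous_const.mul (continuous_const.mul continuous_sinh_div_cosh_sq)).intervalIntegrable _ _
  have h2 : IntervalIntegrable (fun s => 2 * (tanh s / cosh s) ^ 2) volume 0 ℓ :=
    (continuous_const.mul (continuous_tanh_div_cosh.pow 2)).intervalIntegrable _ _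
  have hint := integral_mono_on hℓ.le h0 ((h1.add h2).const_mul (m * E)) hmajor
  rw [intervalIntegral.integral_const_mul, intervalIntegral.integral_const_mul, integral_add h1 h2,
    intervalIntegral.integral_const_mul, intervalIntegral.integral_const_mul,
    intervalIntegral.integral_const_mul, integral_tanh_div_cosh_sq] at hint
  have hscaled : m ^ 2 * ∫ s in (0:ℝ)..ℓ, f s ^ 2 * (cosh s ^ 2)⁻¹ ≤ m ^ 2 * (4 * E) :=
    calc _ ≤ m * E * (m * (2 * ∫ s in (0:ℝ)..ℓ, sinh s / cosh s ^ 2) + 2 * m) := hint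
      _ ≤ m * E * (m * (2 * 1) + 2 * m) := by gcongr; exact integral_sinh_div_cosh_sq_le_one ℓ
      _ = m ^ 2 * (4 * E) := by ring
  exact le_of_mul_le_mul_left hscaled (by positivity)

theorem sq_mul_inv_cosh_sq_div_tanh_le (hf : ContDiff ℝ 1 f) (hf0 : f 0 = 0) {ℓ : ℝ}
    (hℓ : 0 < ℓ) :
    f ℓ ^ 2 * (cosh ℓ ^ 2)⁻¹ / tanh ℓ ≤ (∫ s in (0:ℝ)..ℓ, deriv f s ^ 2) / cosh ℓ := by
  have hcosh := cosh_pos ℓ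
  have hsq := sq_sub_le_mul_integral_deriv_sq hf hℓ.le
  rw [hf0, sub_zero, sub_zero] at hsq
  calc f ℓ ^ 2 * (cosh ℓ ^ 2)⁻¹ / tanh ℓ = f ℓ ^ 2 * (sinh ℓ * cosh ℓ)⁻¹ := by
        rw [mul_div_assoc, inv_cosh_sq_div_tanh]
    _ ≤ (ℓ * ∫ s in (0:ℝ)..ℓ, deriv f s ^ 2) * (ℓ * cosh ℓ)⁻¹ := by
        refine mul_le_mul hsq ?_ (by positivity) ((sq_nonneg _).trans hsq)
        gcongr
        exact (self_lt_sinh_iff.2 hℓ).le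
    _ = (∫ s in (0:ℝ)..ℓ, deriv f s ^ 2) / cosh ℓ := by
        field_simp

end RobinEnergy

/-- Control of the derivative by the Robin energy: there are `β > 0`, `ℓ₀ > 0` so that
for every `ℓ ≥ ℓ₀` and every `C¹` function `f` on `[0,ℓ]` with `f(0) = 0` and
`∫₀^ℓ f tanh cosh⁻² = 0`, one has `(1 − 2/(2+β)) ∫ f'² ≤ 2 e_ℓ(f)`, where
`e_ℓ(f) = ∫ f'² − 2∫ f² cosh⁻² − f(ℓ)² cosh⁻²(ℓ)/tanh(ℓ)`. -/
theorem derivative_controlled_by_robin_energy :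
    ∃ β > (0:ℝ), ∃ ℓ₀ > (0:ℝ), ∀ ℓ ≥ ℓ₀, ∀ f : ℝ → ℝ, ContDiff ℝ 1 f →
      f 0 = 0 →
      (∫ s in (0:ℝ)..ℓ, f s * Real.tanh s * ((Real.cosh s)^2)⁻¹) = 0 →
      (1 - 2 / (2 + β)) * ∫ s in (0:ℝ)..ℓ, (deriv f s)^2
        ≤ 2 * ((∫ s in (0:ℝ)..ℓ, (deriv f s)^2)
            - 2 * (∫ s in (0:ℝ)..ℓ, (f s)^2 * ((Real.cosh s)^2)⁻¹)
            - (f ℓ)^2 * ((Real.cosh ℓ)^2)⁻¹ / Real.tanh ℓ) := by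
  refine ⟨1 / 2, by norm_num, 20, by norm_num, fun ℓ hℓ f hf hf0 horth => ?_⟩
  have hℓ0 : 0 < ℓ := by linarith
  have henergy := robinEnergy_eq_integral_groundStateDeriv_sq hf hf0 hℓ0.le
  have hpotential := integral_sq_mul_inv_cosh_sq_le hf hf0 hℓ0 horth
  have hboundary := sq_mul_inv_cosh_sq_div_tanh_le hf hf0 hℓ0
  have hcosh : 10 ≤ cosh ℓ := by
    rw [cosh_eq]
    linarith [exp_pos (-ℓ), add_one_le_exp ℓ]
  have hA : 0 ≤ ∫ s in (0:ℝ)..ℓ, deriv f s ^ 2 := integral_nonneg hℓ0.le fun _ _ => sq_nonneg _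
  have hdecay : (∫ s in (0:ℝ)..ℓ, deriv f s ^ 2) / cosh ℓ ≤ (∫ s in (0:ℝ)..ℓ, deriv f s ^ 2) / 10 :=
    div_le_div_of_nonneg_left hA (by norm_num) hcosh
  rw [robinEnergy] at henergy
  norm_num
  linarith
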